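/- arXiv:2601.16090 — 5 statements merged into one kernel-verified Lean document; each statement's English description precedes it below -/
import Mathlib

section
/- Let M = U^{⊕3} ⊕ T be an even lattice, given as the orthogonal direct sum of three copies of the hyperbolic plane U and an even lattice T. Then for every primitive vector ℓ ∈ M and every vector a ∈ M, the orthogonal complement of {ℓ, a} in M contains a hyperbolic plane: there exist u, w ∈ M with u·ℓ = u·a = w·ℓ = w·a = 0, u² = 0, w² = 0, and u·w = 1. -/
/-- Solvability predicate: given the coordinates of two vectors
`v₁ = g1•e₁+h1•f₁+g2•e₂+h2•f₂+g3•e₃+h3•f₃` and `v₂ = p1•e₁+q1•f₁+...` in `U³`,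
there is a hyperbolic pair orthogonal to both. -/
def GoodL (g1 h1 g2 h2 g3 h3 p1 q1 p2 q2 p3 q3 : ℤ) : Prop :=
  ∃ A1 B1 A2 B2 A3 B3 C1 D1 C2 D2 C3 D3 : ℤ,
    A1*h1 + B1*g1 + A2*h2 + B2*g2 + A3*h3 + B3*g3 = 0 ∧
    A1*q1 + B1*p1 + A2*q2 + B2*p2 + A3*q3 + B3*p3 = 0 ∧
    C1*h1 + D1*g1 + C2*h2 + D2*g2 + C3*h3 + D3*g3 = 0 ∧
    C1*q1 + D1*p1 + C2*q2 + D2*p2 + C3*q3 + D3*p3 = 0 ∧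
    A1*B1 + A2*B2 + A3*B3 = 0 ∧
    C1*D1 + C2*D2 + C3*D3 = 0 ∧
    A1*D1 + B1*C1 + A2*D2 + B2*C2 + A3*D3 + B3*C3 = 1

private lemma emod_natAbs_lt (x y : ℤ) (hy : y ≠ 0) : (x % y).natAbs < y.natAbs := by
  have h1 : 0 ≤ x % y := Int.emod_nonneg x hy
  rcases hy.lt_or_gt with h | h
  · have h3 := Int.emod_lt_of_pos x (b := -y) (by omega)
    rw [Int.emod_neg] at h3
    omega
  · have h3 := Int.emod_lt_of_pos x h
    omega

/-- Euclid-style descent engine for clearing the second hyperbolic-plane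
components of a vector, using elementary isometries of `U ⊕ U`. -/
private lemma engine (Φ : ℤ → ℤ → ℤ → ℤ → Prop)
    (hMe : ∀ a b c d s t, Φ (a + s*d + t*c - s*t*b) b (c - s*b) (d - t*b) → Φ a b c d)
    (hSW1 : ∀ a b c d, Φ b a c d → Φ a b c d)
    (hSW2 : ∀ a b c d, Φ a b d c → Φ a b c d)
    (hSWC : ∀ a b c d, Φ c d a b → Φ a b c d)
    (hBase : ∀ a b, Φ a b 0 0) :
    ∀ a b c d, Φ a b c d := by
  have inner : ∀ n : ℕ, ∀ a b c d : ℤ, b ≠ 0 → b.natAbs ≤ n → Φ a b c d := by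
    intro n
    induction n with
    | zero =>
      intro a b c d hb hle
      exact absurd (Int.natAbs_eq_zero.mp (Nat.le_zero.mp hle)) hb
    | succ n ih =>
      intro a b c d hb hle
      apply hMe a b c d (c / b) (d / b)
      rw [show c - c / b * b = c % b by rw [Int.emod_def]; ring,
          show d - d / b * b = d % b by rw [Int.emod_def]; ring]
      by_cases hd0 : d % b = 0
      · by_cases hc0 : c % b = 0
        · rw [hd0, hc0]; exact hBase _ b
        · rw [hd0]
          apply hSW2
          apply hSWC
          have hlt := emod_natAbs_lt c b hb
          exact ih 0 (c % b) _ b hc0 (by omega)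
      · apply hSWC
        have hlt := emod_natAbs_lt d b hb
        exact ih (c % b) (d % b) _ b hd0 (by omega)
  intro a b c d
  by_cases hb : b = 0
  · subst hb
    by_cases hc : c = 0
    · by_cases hd : d = 0
      · rw [hc, hd]; exact hBase a 0
      · by_cases ha : a = 0
        · rw [ha]; exact hSWC _ _ _ _ (hBase c d)
        · -- reduce a modulo gcd c d = |d| (c = 0)
          have hbez : (Int.gcd c d : ℤ) = c * Int.gcdA c d + d * Int.gcdB c d :=
            Int.gcd_eq_gcd_ab c d
          set G : ℤ := (Int.gcd c d : ℤ) with hG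
          apply hMe a 0 c d (-(a / G) * Int.gcdB c d) (-(a / G) * Int.gcdA c d)
          rw [show a + -(a / G) * Int.gcdB c d * d + -(a / G) * Int.gcdA c d * c -
                -(a / G) * Int.gcdB c d * (-(a / G) * Int.gcdA c d) * 0 = a % G by
                rw [Int.emod_def]; linear_combination (a / G) * hbez,
              show c - -(a / G) * Int.gcdB c d * 0 = c by ring,
              show d - -(a / G) * Int.gcdA c d * 0 = d by ring]
          by_cases ha' : a % G = 0
          · rw [ha']; exact hSWC _ _ _ _ (hBase c d)
          · exact hSW1 _ _ _ _ (inner ((a % G).natAbs) 0 (a % G) c d ha' le_rfl)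
    · by_cases ha : a = 0
      · rw [ha]; exact hSWC _ _ _ _ (hBase c d)
      · have hbez : (Int.gcd c d : ℤ) = c * Int.gcdA c d + d * Int.gcdB c d :=
          Int.gcd_eq_gcd_ab c d
        set G : ℤ := (Int.gcd c d : ℤ) with hG
        apply hMe a 0 c d (-(a / G) * Int.gcdB c d) (-(a / G) * Int.gcdA c d)
        rw [show a + -(a / G) * Int.gcdB c d * d + -(a / G) * Int.gcdA c d * c -
              -(a / G) * Int.gcdB c d * (-(a / G) * Int.gcdA c d) * 0 = a % G by
              rw [Int.emod_def]; linear_combination (a / G) * hbez,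
            show c - -(a / G) * Int.gcdB c d * 0 = c by ring,
            show d - -(a / G) * Int.gcdA c d * 0 = d by ring]
        by_cases ha' : a % G = 0
        · rw [ha']; exact hSWC _ _ _ _ (hBase c d)
        · exact hSW1 _ _ _ _ (inner ((a % G).natAbs) 0 (a % G) c d ha' le_rfl)
  · exact inner b.natAbs a b c d hb le_rfl

/-- Phase 3 : both vectors have no components in the third hyperbolic plane
after clearing: `v₁ ∈ U₁`, clear the `U₃`-components of `v₂`. -/
private lemma phase3 : ∀ a b c d : ℤ, ∀ A B p1 q1 : ℤ,
    GoodL A B 0 0 0 0 p1 q1 a b c d := by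
  refine engine (fun a b c d => ∀ A B p1 q1 : ℤ, GoodL A B 0 0 0 0 p1 q1 a b c d)
    ?_ ?_ ?_ ?_ ?_
  · intro a b c d s t h A B p1 q1
    obtain ⟨A1,B1,A2,B2,A3,B3,C1,D1,C2,D2,C3,D3,e1,e2,e3,e4,e5,e6,e7⟩ := h A B p1 q1
    exact ⟨A1, B1, A2 - s*B3 - t*A3 - s*t*B2, B2, A3 + s*B2, B3 + t*B2,
           C1, D1, C2 - s*D3 - t*C3 - s*t*D2, D2, C3 + s*D2, D3 + t*D2,
           by linear_combination e1, by linear_combination e2, by linear_combination e3,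
           by linear_combination e4, by linear_combination e5, by linear_combination e6,
           by linear_combination e7⟩
  · intro a b c d h A B p1 q1
    obtain ⟨A1,B1,A2,B2,A3,B3,C1,D1,C2,D2,C3,D3,e1,e2,e3,e4,e5,e6,e7⟩ := h A B p1 q1
    exact ⟨A1, B1, B2, A2, A3, B3, C1, D1, D2, C2, C3, D3,
           by linear_combination e1, by linear_combination e2, by linear_combination e3,
           by linear_combination e4, by linear_combination e5, by linear_combination e6,
           by linear_combination e7⟩
  · intro a b c d h A B p1 q1
    obtain ⟨A1,B1,A2,B2,A3,B3,C1,D1,C2,D2,C3,D3,e1,e2,e3,e4,e5,e6,e7⟩ := h A B p1 q1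
    exact ⟨A1, B1, A2, B2, B3, A3, C1, D1, C2, D2, D3, C3,
           by linear_combination e1, by linear_combination e2, by linear_combination e3,
           by linear_combination e4, by linear_combination e5, by linear_combination e6,
           by linear_combination e7⟩
  · intro a b c d h A B p1 q1
    obtain ⟨A1,B1,A2,B2,A3,B3,C1,D1,C2,D2,C3,D3,e1,e2,e3,e4,e5,e6,e7⟩ := h A B p1 q1
    exact ⟨A1, B1, A3, B3, A2, B2, C1, D1, C3, D3, C2, D2,
           by linear_combination e1, by linear_combination e2, by linear_combination e3,
           by linear_combination e4, by linear_combination e5, by linear_combination e6,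
           by linear_combination e7⟩
  · intro a b A B p1 q1
    exact ⟨0, 0, 0, 0, 1, 0, 0, 0, 0, 0, 0, 1,
           by ring, by ring, by ring, by ring, by ring, by ring, by ring⟩

/-- Phase 2 : `v₁` has no `U₃`-component; clear its `U₂`-component. -/
private lemma phase2 : ∀ a b c d : ℤ, ∀ p1 q1 p2 q2 p3 q3 : ℤ,
    GoodL a b c d 0 0 p1 q1 p2 q2 p3 q3 := by
  refine engine (fun a b c d => ∀ p1 q1 p2 q2 p3 q3 : ℤ,
    GoodL a b c d 0 0 p1 q1 p2 q2 p3 q3) ?_ ?_ ?_ ?_ ?_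
  · intro a b c d s t h p1 q1 p2 q2 p3 q3
    obtain ⟨A1,B1,A2,B2,A3,B3,C1,D1,C2,D2,C3,D3,e1,e2,e3,e4,e5,e6,e7⟩ :=
      h (p1 + s*q2 + t*p2 - s*t*q1) q1 (p2 - s*q1) (q2 - t*q1) p3 q3
    exact ⟨A1 - s*B2 - t*A2 - s*t*B1, B1, A2 + s*B1, B2 + t*B1, A3, B3,
           C1 - s*D2 - t*C2 - s*t*D1, D1, C2 + s*D1, D2 + t*D1, C3, D3,
           by linear_combination e1, by linear_combination e2, by linear_combination e3,
           by linear_combination e4, by linear_combination e5, by linear_combination e6,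
           by linear_combination e7⟩
  · intro a b c d h p1 q1 p2 q2 p3 q3
    obtain ⟨A1,B1,A2,B2,A3,B3,C1,D1,C2,D2,C3,D3,e1,e2,e3,e4,e5,e6,e7⟩ :=
      h q1 p1 p2 q2 p3 q3
    exact ⟨B1, A1, A2, B2, A3, B3, D1, C1, C2, D2, C3, D3,
           by linear_combination e1, by linear_combination e2, by linear_combination e3,
           by linear_combination e4, by linear_combination e5, by linear_combination e6,
           by linear_combination e7⟩
  · intro a b c d h p1 q1 p2 q2 p3 q3
    obtain ⟨A1,B1,A2,B2,A3,B3,C1,D1,C2,D2,C3,D3,e1,e2,e3,e4,e5,e6,e7⟩ :=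
      h p1 q1 q2 p2 p3 q3
    exact ⟨A1, B1, B2, A2, A3, B3, C1, D1, D2, C2, C3, D3,
           by linear_combination e1, by linear_combination e2, by linear_combination e3,
           by linear_combination e4, by linear_combination e5, by linear_combination e6,
           by linear_combination e7⟩
  · intro a b c d h p1 q1 p2 q2 p3 q3
    obtain ⟨A1,B1,A2,B2,A3,B3,C1,D1,C2,D2,C3,D3,e1,e2,e3,e4,e5,e6,e7⟩ :=
      h p2 q2 p1 q1 p3 q3
    exact ⟨A2, B2, A1, B1, A3, B3, C2, D2, C1, D1, C3, D3,
           by linear_combination e1, by linear_combination e2, by linear_combination e3,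
           by linear_combination e4, by linear_combination e5, by linear_combination e6,
           by linear_combination e7⟩
  · intro a b p1 q1 p2 q2 p3 q3
    exact phase3 p2 q2 p3 q3 a b p1 q1

/-- Phase 1 : clear the `U₂ ⊕ U₃` components of `v₁`. -/
private lemma phase1 : ∀ a b c d : ℤ, ∀ g1 h1 p1 q1 p2 q2 p3 q3 : ℤ,
    GoodL g1 h1 a b c d p1 q1 p2 q2 p3 q3 := by
  refine engine (fun a b c d => ∀ g1 h1 p1 q1 p2 q2 p3 q3 : ℤ,
    GoodL g1 h1 a b c d p1 q1 p2 q2 p3 q3) ?_ ?_ ?_ ?_ ?_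
  · intro a b c d s t h g1 h1 p1 q1 p2 q2 p3 q3
    obtain ⟨A1,B1,A2,B2,A3,B3,C1,D1,C2,D2,C3,D3,e1,e2,e3,e4,e5,e6,e7⟩ :=
      h g1 h1 p1 q1 (p2 + s*q3 + t*p3 - s*t*q2) q2 (p3 - s*q2) (q3 - t*q2)
    exact ⟨A1, B1, A2 - s*B3 - t*A3 - s*t*B2, B2, A3 + s*B2, B3 + t*B2,
           C1, D1, C2 - s*D3 - t*C3 - s*t*D2, D2, C3 + s*D2, D3 + t*D2,
           by linear_combination e1, by linear_combination e2, by linear_combination e3,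
           by linear_combination e4, by linear_combination e5, by linear_combination e6,
           by linear_combination e7⟩
  · intro a b c d h g1 h1 p1 q1 p2 q2 p3 q3
    obtain ⟨A1,B1,A2,B2,A3,B3,C1,D1,C2,D2,C3,D3,e1,e2,e3,e4,e5,e6,e7⟩ :=
      h g1 h1 p1 q1 q2 p2 p3 q3
    exact ⟨A1, B1, B2, A2, A3, B3, C1, D1, D2, C2, C3, D3,
           by linear_combination e1, by linear_combination e2, by linear_combination e3,
           by linear_combination e4, by linear_combination e5, by linear_combination e6,
           by linear_combination e7⟩
  · intro a b c d h g1 h1 p1 q1 p2 q2 p3 q3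
    obtain ⟨A1,B1,A2,B2,A3,B3,C1,D1,C2,D2,C3,D3,e1,e2,e3,e4,e5,e6,e7⟩ :=
      h g1 h1 p1 q1 p2 q2 q3 p3
    exact ⟨A1, B1, A2, B2, B3, A3, C1, D1, C2, D2, D3, C3,
           by linear_combination e1, by linear_combination e2, by linear_combination e3,
           by linear_combination e4, by linear_combination e5, by linear_combination e6,
           by linear_combination e7⟩
  · intro a b c d h g1 h1 p1 q1 p2 q2 p3 q3
    obtain ⟨A1,B1,A2,B2,A3,B3,C1,D1,C2,D2,C3,D3,e1,e2,e3,e4,e5,e6,e7⟩ :=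
      h g1 h1 p1 q1 p3 q3 p2 q2
    exact ⟨A1, B1, A3, B3, A2, B2, C1, D1, C3, D3, C2, D2,
           by linear_combination e1, by linear_combination e2, by linear_combination e3,
           by linear_combination e4, by linear_combination e5, by linear_combination e6,
           by linear_combination e7⟩
  · intro a b g1 h1 p1 q1 p2 q2 p3 q3
    exact phase2 g1 h1 a b p1 q1 p2 q2 p3 q3

/-- Let `M = U^{⊕3} ⊕ T` be an even lattice, given as the orthogonal direct
sum of three copies of the hyperbolic plane `U` (with bases `e i, f i`) and an even lattice `T`.
Then for every primitive vector `ℓ ∈ M` and every vector `a ∈ M`, the orthogonal complement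
of `{ℓ, a}` in `M` contains a hyperbolic plane. -/
theorem statement0
    {M : Type*} [AddCommGroup M] [Module ℤ M] [Module.Free ℤ M] [Module.Finite ℤ M]
    (B : M →ₗ[ℤ] M →ₗ[ℤ] ℤ)
    (hsymm : ∀ x y : M, B x y = B y x)
    (hnondeg : ∀ x : M, (∀ y : M, B x y = 0) → x = 0)
    (heven : ∀ x : M, 2 ∣ B x x)
    (e f : Fin 3 → M) (T : Submodule ℤ M)
    (hee : ∀ i j, B (e i) (e j) = 0)
    (hff : ∀ i j, B (f i) (f j) = 0)
    (hef : ∀ i j, B (e i) (f j) = if i = j then 1 else 0)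
    (heT : ∀ i, ∀ t ∈ T, B (e i) t = 0)
    (hfT : ∀ i, ∀ t ∈ T, B (f i) t = 0)
    (hdecomp : Submodule.span ℤ (Set.range e ∪ Set.range f) ⊔ T = ⊤)
    (ℓ : M)
    (hprim : ∀ (c : ℤ) (x : M), ℓ = c • x → 0 < c → c = 1)
    (a : M) :
    ∃ u w : M,
      B u ℓ = 0 ∧ B u a = 0 ∧ B w ℓ = 0 ∧ B w a = 0 ∧
      B u u = 0 ∧ B w w = 0 ∧ B u w = 1 := by
  have hfe : ∀ i j, B (f i) (e j) = if j = i then 1 else 0 := by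
    intro i j; rw [hsymm]; exact hef j i
  obtain ⟨A1,B1,A2,B2,A3,B3,C1,D1,C2,D2,C3,D3,e1,e2,e3,e4,e5,e6,e7⟩ :=
    phase1 (B (f 1) ℓ) (B (e 1) ℓ) (B (f 2) ℓ) (B (e 2) ℓ) (B (f 0) ℓ) (B (e 0) ℓ)
      (B (f 0) a) (B (e 0) a) (B (f 1) a) (B (e 1) a) (B (f 2) a) (B (e 2) a)
  refine ⟨A1 • e 0 + B1 • f 0 + A2 • e 1 + B2 • f 1 + A3 • e 2 + B3 • f 2,
          C1 • e 0 + D1 • f 0 + C2 • e 1 + D2 • f 1 + C3 • e 2 + D3 • f 2,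
          ?_, ?_, ?_, ?_, ?_, ?_, ?_⟩ <;>
    simp [hee, hff, hef, hfe, mul_comm] <;>
    [linear_combination e1; linear_combination e2; linear_combination e3;
     linear_combination e4; linear_combination 2 * e5; linear_combination 2 * e6;
     linear_combination e7]
end

section
/- Let M be a lattice, ℓ ∈ M a primitive vector with ℓ² > 0, and a ∈ M. Suppose that M contains a copy of the hyperbolic plane orthogonal to both ℓ and a; that is, there exist e, f ∈ M with e² = f² = 0, e·f = 1, and e·ℓ = e·a = f·ℓ = f·a = 0. Then for every positive integer N there exist a vector h ∈ M and infinitely many positive integers n (i.e., for every n₀ there exists n ≥ n₀) such that: (i) the subgroup L = ℤℓ + ℤ(n a + h) is a primitive sublattice of M, and (ii) L contains no nonzero vector v with −N ≤ v² ≤ 0. -/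
/-!
Put `w = n a + e + k f`. As `f·ℓ = 0` and `f·w = 1`, primitivity of `ℓ` makes `ℤℓ + ℤw`
primitive. For `v = xℓ + yw` one has `ℓ² v² = s² - E y²` with `s = x ℓ² + y ℓ·w` and
`E = (ℓ·w)² - ℓ² w² = ((ℓ·a)² - ℓ² a²) n² - 2 ℓ² k`. Take, for each `1 ≤ j ≤ N ℓ²`, a prime `P_j`
modulo which `-j` is a non-residue (a prime divisor of `8m - 1` with Jacobi symbol `(-m | ·) = -1`),
and a fresh prime `P`; a Bézout relation gives `k` such that for every `n` divisible by
`D = P ∏ P_j` the number `E` is divisible by every `P_j` and exactly once by `P`. Then for `y ≠ 0`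
the value `s² - E y²` avoids `[-N ℓ², 0]`: `0` would make `E` a square, and `-j` would make `-j`
a square modulo `P_j`.
-/

theorem jacobiSym_neg_eight_mul_sub_one {m : ℕ} (hm : 0 < m) :
    jacobiSym (-(m : ℤ)) (8 * m - 1) = -1 := by
  set n := 8 * m - 1
  have hn8 : n % 8 = 7 := by omega
  have hn : Odd n := Nat.odd_iff.mpr (by omega)
  obtain ⟨α, u, hu, rfl⟩ : ∃ α u, Odd u ∧ m = 2 ^ α * u :=
    ⟨_, _, Nat.odd_iff.mpr (Nat.two_dvd_ne_zero.mp (Nat.not_dvd_ordCompl Nat.prime_two hm.ne')),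
      (Nat.ordProj_mul_ordCompl_eq_self m 2).symm⟩
  -- `(-1 | n) = -1` and `(2 | n) = 1` as `n ≡ 7 (mod 8)`, while `(u | n) = 1` by reciprocity
  -- since `n ≡ -1 (mod u)`
  have hnu : jacobiSym n u = jacobiSym (-1) u := by
    apply jacobiSym.mod_left'
    have hcast : (n : ℤ) + 1 = 8 * 2 ^ α * u := by
      have : n + 1 = 8 * (2 ^ α * u) := by omega
      exact_mod_cast this.trans (by ring)
    exact (Int.modEq_iff_dvd.mpr ⟨8 * 2 ^ α, by rw [sub_neg_eq_add, hcast]; ring⟩).symm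
  have hun : jacobiSym u n = 1 := by
    rcases Nat.odd_mod_four_iff.mp (Nat.odd_iff.mp hu) with h1 | h3
    · rw [jacobiSym.quadratic_reciprocity_one_mod_four h1 hn, hnu,
        jacobiSym.at_neg_one hu, ZMod.χ₄_nat_one_mod_four h1]
    · rw [jacobiSym.quadratic_reciprocity_three_mod_four h3 (by omega), hnu,
        jacobiSym.at_neg_one hu, ZMod.χ₄_nat_three_mod_four h3]
      norm_num
  have hsplit : -((2 ^ α * u : ℕ) : ℤ) = -1 * (2 ^ α * u) := by push_cast; ring
  rw [hsplit, jacobiSym.mul_left, jacobiSym.mul_left, jacobiSym.pow_left,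
    jacobiSym.at_neg_one hn, jacobiSym.at_two hn, ZMod.χ₄_nat_three_mod_four (by omega),
    ZMod.χ₈_nat_eq_if_mod_eight, hun]
  simp [hn8, Nat.odd_iff.mp hn]

theorem exists_prime_not_isSquare_neg {m : ℕ} (hm : 0 < m) :
    ∃ P : ℕ, P.Prime ∧ ¬IsSquare ((-m : ℤ) : ZMod P) := by
  obtain ⟨P, hP, -, hJ⟩ :=
    jacobiSym.eq_neg_one_at_prime_divisor_of_eq_neg_one (jacobiSym_neg_eight_mul_sub_one hm)
  exact ⟨P, hP, ZMod.nonsquare_of_jacobiSym_eq_neg_one hJ⟩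

theorem exists_prime_not_dvd_not_isSquare_neg {q : ℤ} (hq : q ≠ 0) {j : ℕ} (hj : 0 < j) :
    ∃ P : ℕ, P.Prime ∧ ¬(P : ℤ) ∣ q ∧ ¬IsSquare ((-j : ℤ) : ZMod P) := by
  -- a prime modulo which `-j q²` is a non-residue cannot divide `q`, and `-j` is a non-residue too
  obtain ⟨P, hP, hns⟩ := exists_prime_not_isSquare_neg (m := j * q.natAbs ^ 2) (by positivity)
  have hcast : ((-(j * q.natAbs ^ 2 : ℕ) : ℤ) : ZMod P) = -j * (q : ZMod P) ^ 2 := by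
    push_cast [Int.natCast_natAbs, sq_abs]; ring
  rw [hcast] at hns
  refine ⟨P, hP, fun hdvd => hns ⟨0, ?_⟩, fun ⟨r, hr⟩ => hns ⟨r * q, ?_⟩⟩
  · rw [(ZMod.intCast_zmod_eq_zero_iff_dvd q P).mpr hdvd]; ring
  · push_cast at hr; rw [hr]; ring

def HasNonresidueDivisors (m : ℕ) (E : ℤ) : Prop :=
  ∀ j : ℕ, 0 < j → j ≤ m → ∃ P : ℕ, P.Prime ∧ (P : ℤ) ∣ E ∧ ¬IsSquare ((-j : ℤ) : ZMod P)

theorem HasNonresidueDivisors.of_dvd {m : ℕ} {R E : ℤ} (hR : HasNonresidueDivisors m R)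
    (hRE : R ∣ E) : HasNonresidueDivisors m E := fun j hj hjm =>
  let ⟨P, hP, hPR, hns⟩ := hR j hj hjm
  ⟨P, hP, hPR.trans hRE, hns⟩

theorem exists_isCoprime_hasNonresidueDivisors {q : ℤ} (hq : q ≠ 0) (m : ℕ) :
    ∃ R : ℕ, 0 < R ∧ IsCoprime (R : ℤ) q ∧ HasNonresidueDivisors m R := by
  induction m with
  | zero =>
    exact ⟨1, one_pos, by rw [Nat.cast_one]; exact isCoprime_one_left, fun j hj hjm => by omega⟩
  | succ m ih =>
    obtain ⟨R, hR, hRq, hRdiv⟩ := ih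
    obtain ⟨P, hP, hPq, hns⟩ := exists_prime_not_dvd_not_isSquare_neg hq m.succ_pos
    refine ⟨R * P, Nat.mul_pos hR hP.pos, ?_, fun j hj hjm => ?_⟩
    · push_cast
      exact hRq.mul_left ((Nat.prime_iff_prime_int.mp hP).coprime_iff_not_dvd.mpr hPq)
    · rcases Nat.lt_or_eq_of_le hjm with hjm | rfl
      · exact hRdiv.of_dvd (by push_cast; exact dvd_mul_right _ _) j hj (by omega)
      · exact ⟨P, hP, by push_cast; exact dvd_mul_left _ _, hns⟩

theorem not_isSquare_of_dvd_of_not_sq_dvd {α : Type*} [CommMonoidWithZero α] {p E : α}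
    (hp : Prime p) (hpE : p ∣ E) (hpE2 : ¬p ^ 2 ∣ E) : ¬IsSquare E := by
  rintro ⟨d, rfl⟩
  have hd : p ∣ d := hp.dvd_of_dvd_pow (n := 2) (by rwa [sq])
  exact hpE2 (by rw [sq]; exact mul_dvd_mul hd hd)

theorem exists_dvd_forall_not_isSquare_hasNonresidueDivisors (c : ℤ) {q : ℤ} (hq : q ≠ 0)
    (m : ℕ) : ∃ D : ℕ, 0 < D ∧ ∃ k : ℤ, ∀ n : ℤ, (D : ℤ) ∣ n →
      ¬IsSquare (c * n ^ 2 - q * k) ∧ HasNonresidueDivisors m (c * n ^ 2 - q * k) := by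
  obtain ⟨R, hR, hRq, hRdiv⟩ := exists_isCoprime_hasNonresidueDivisors hq m
  obtain ⟨P, hPge, hP⟩ := Nat.exists_infinite_primes (R + q.natAbs + 1)
  have hPZ : Prime (P : ℤ) := Nat.prime_iff_prime_int.mp hP
  have hPR : ¬(P : ℤ) ∣ R := fun h => by
    have := Nat.le_of_dvd hR (Int.natCast_dvd_natCast.mp h); omega
  have hPq : ¬(P : ℤ) ∣ q := fun h => by
    have := Nat.le_of_dvd (Int.natAbs_pos.mpr hq) (Int.natCast_dvd.mp h); omega
  -- with `D = P R` and `q k ≡ -D (mod P D)`, every `E = c n² - q k` with `D ∣ n` is `D (1 + D X)`,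
  -- so `R ∣ E` and `P` divides `E` exactly once
  have hPq' : IsCoprime (P : ℤ) q := hPZ.coprime_iff_not_dvd.mpr hPq
  obtain ⟨u, v, huv⟩ : IsCoprime q (P * (P * R)) :=
    (hPq'.mul_left (hPq'.mul_left hRq)).symm
  refine ⟨P * R, Nat.mul_pos hP.pos hR, -(P * R) * u, fun n ⟨I, hI⟩ => ?_⟩
  have hE : c * n ^ 2 - q * (-(P * R) * u) =
      P * R * (1 + P * (R * (c * I ^ 2 - v * P))) := by
    push_cast at hI; rw [hI]; linear_combination (P * R : ℤ) * huv
  rw [hE]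
  refine ⟨not_isSquare_of_dvd_of_not_sq_dvd hPZ (dvd_mul_of_dvd_left (dvd_mul_right _ _) _) ?_,
    hRdiv.of_dvd (dvd_mul_of_dvd_left (dvd_mul_left _ _) _)⟩
  intro hP2
  rw [sq, mul_assoc] at hP2
  rcases hPZ.dvd_mul.mp ((mul_dvd_mul_iff_left hPZ.ne_zero).mp hP2) with hR' | h1
  · exact hPR hR'
  · exact hPZ.not_dvd_one ((dvd_add_left (dvd_mul_right _ _)).mp h1)

theorem sq_sub_mul_sq_notMem_Icc {m : ℕ} {E : ℤ} (hE : ¬IsSquare E)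
    (hdiv : HasNonresidueDivisors m E) (s : ℤ) {y : ℤ} (hy : y ≠ 0) :
    s ^ 2 - E * y ^ 2 ∉ Set.Icc (-(m : ℤ)) 0 := by
  rintro ⟨hlo, hhi⟩
  obtain ⟨j, hj⟩ := Int.eq_ofNat_of_zero_le (by linarith : 0 ≤ E * y ^ 2 - s ^ 2)
  rcases Nat.eq_zero_or_pos j with rfl | hj0
  · obtain ⟨d, rfl⟩ : y ∣ s := (Int.pow_dvd_pow_iff two_ne_zero).mp ⟨E, by linear_combination -hj⟩
    exact hE ⟨d, mul_left_cancel₀ (pow_ne_zero 2 hy) (by linear_combination hj)⟩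
  · obtain ⟨P, -, hPE, hns⟩ := hdiv j hj0 (by omega)
    have hE0 : (E : ZMod P) = 0 := (ZMod.intCast_zmod_eq_zero_iff_dvd E P).mpr hPE
    refine hns ⟨s, ?_⟩
    have := congrArg (fun z : ℤ => (z : ZMod P)) hj
    push_cast at this ⊢
    linear_combination this - y ^ 2 * hE0

section Lattice

variable {M : Type*} [AddCommGroup M]

theorem exists_eq_smul_of_smul_eq_smul [IsAddTorsionFree M] {ℓ u : M}
    (hprim : ∀ (c : ℤ) (x : M), ℓ = c • x → 0 < c → c = 1) {r x : ℤ} (hr : r ≠ 0)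
    (h : r • u = x • ℓ) : ∃ z : ℤ, u = z • ℓ := by
  obtain ⟨g, r', x', hg, hcop, rfl, rfl⟩ :=
    Int.exists_gcd_one' (Int.gcd_pos_of_ne_zero_left x hr)
  have h' : r' • u = x' • ℓ :=
    smul_right_injective M (Int.natCast_ne_zero.mpr hg.ne') <| by
      simp only [smul_smul, mul_comm (g : ℤ)]
      exact h
  obtain ⟨σ, τ, hστ⟩ := Int.isCoprime_iff_gcd_eq_one.mpr hcop
  -- `ℓ = r' • (σ • ℓ + τ • u)`, so primitivity forces `r' = ±1`
  have hℓ : ℓ = r' • (σ • ℓ + τ • u) := by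
    rw [smul_add, smul_comm r' τ, h', smul_smul, smul_smul, ← add_smul, mul_comm r', hστ,
      one_smul]
  have hr' : r' = 1 ∨ r' = -1 := by
    rcases lt_or_gt_of_ne (left_ne_zero_of_mul hr) with hneg | hpos
    · have := hprim (-r') (-(σ • ℓ + τ • u)) (by rwa [neg_smul_neg]) (by omega)
      exact Or.inr (by omega)
    · exact Or.inl (hprim r' _ hℓ hpos)
  rcases hr' with rfl | rfl
  · exact ⟨x', by simpa using h'⟩
  · exact ⟨-x', by rw [neg_smul, ← h', neg_one_smul, neg_neg]⟩

theorem mem_span_pair_of_smul_mem [IsAddTorsionFree M] {ℓ w : M}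
    (hprim : ∀ (c : ℤ) (x : M), ℓ = c • x → 0 < c → c = 1) (φ : M →ₗ[ℤ] ℤ) (hφℓ : φ ℓ = 0)
    (hφw : φ w = 1) (r : ℤ) (v : M) (hr : r ≠ 0)
    (hv : r • v ∈ Submodule.span ℤ ({ℓ, w} : Set M)) :
    v ∈ Submodule.span ℤ ({ℓ, w} : Set M) := by
  obtain ⟨x, y, hxy⟩ := Submodule.mem_span_pair.mp hv
  have hy : y = r * φ v := by
    simpa [hφℓ, hφw] using congrArg φ hxy
  obtain ⟨z, hz⟩ := exists_eq_smul_of_smul_eq_smul hprim hr (u := v - φ v • w) (x := x)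
    (by rw [smul_sub, smul_smul, ← hy, ← hxy, add_sub_cancel_right])
  exact Submodule.mem_span_pair.mpr ⟨z, φ v, by rw [← hz, sub_add_cancel]⟩

theorem bilin_mul_apply_add_smul (B : M →ₗ[ℤ] M →ₗ[ℤ] ℤ) (hsymm : ∀ x y : M, B x y = B y x)
    (ℓ w : M) (x y : ℤ) :
    B ℓ ℓ * B (x • ℓ + y • w) (x • ℓ + y • w) =
      (x * B ℓ ℓ + y * B ℓ w) ^ 2 - (B ℓ w ^ 2 - B ℓ ℓ * B w w) * y ^ 2 := by
  simp only [map_add, map_smul, LinearMap.add_apply, LinearMap.smul_apply, smul_eq_mul,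
    hsymm w ℓ]
  ring

theorem apply_self_notMem_Icc_of_mem_span_pair (B : M →ₗ[ℤ] M →ₗ[ℤ] ℤ)
    (hsymm : ∀ x y : M, B x y = B y x) {ℓ w : M} (hpos : 0 < B ℓ ℓ) {N m : ℕ}
    (hm : N * B ℓ ℓ ≤ m) (hE : ¬IsSquare (B ℓ w ^ 2 - B ℓ ℓ * B w w))
    (hdiv : HasNonresidueDivisors m (B ℓ w ^ 2 - B ℓ ℓ * B w w))
    (v : M) (hv : v ∈ Submodule.span ℤ ({ℓ, w} : Set M)) (hv0 : v ≠ 0) :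
    ¬(-(N : ℤ) ≤ B v v ∧ B v v ≤ 0) := by
  rintro ⟨hlo, hhi⟩
  obtain ⟨x, y, rfl⟩ := Submodule.mem_span_pair.mp hv
  have hid := bilin_mul_apply_add_smul B hsymm ℓ w x y
  rcases eq_or_ne y 0 with rfl | hy
  · have hx : x ≠ 0 := by rintro rfl; simp at hv0
    have hposv : 0 < B ℓ ℓ * B (x • ℓ + (0 : ℤ) • w) (x • ℓ + (0 : ℤ) • w) := by
      rw [hid]
      simpa using pow_two_pos_of_ne_zero (mul_ne_zero hx hpos.ne')
    exact hposv.not_ge (mul_nonpos_of_nonneg_of_nonpos hpos.le hhi)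
  · refine sq_sub_mul_sq_notMem_Icc hE hdiv (x * B ℓ ℓ + y * B ℓ w) hy ⟨?_, ?_⟩ <;>
      rw [← hid] <;> nlinarith

end Lattice

theorem statement1_general
    {M : Type*} [AddCommGroup M] [Module ℤ M] [Module.Free ℤ M]
    (B : M →ₗ[ℤ] M →ₗ[ℤ] ℤ)
    (hsymm : ∀ x y : M, B x y = B y x)
    (ℓ a e f : M)
    (hprim : ∀ (c : ℤ) (x : M), ℓ = c • x → 0 < c → c = 1)
    (hpos : 0 < B ℓ ℓ)
    (hee : B e e = 0) (hff : B f f = 0) (hef : B e f = 1)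
    (heℓ : B e ℓ = 0) (hea : B e a = 0) (hfℓ : B f ℓ = 0) (hfa : B f a = 0)
    (N : ℕ) :
    ∃ h : M, ∀ n₀ : ℕ, ∃ n : ℕ, n₀ ≤ n ∧ 0 < n ∧
      (∀ (r : ℤ) (v : M), r ≠ 0 →
          r • v ∈ Submodule.span ℤ ({ℓ, (n : ℤ) • a + h} : Set M) →
          v ∈ Submodule.span ℤ ({ℓ, (n : ℤ) • a + h} : Set M)) ∧
      (∀ v ∈ Submodule.span ℤ ({ℓ, (n : ℤ) • a + h} : Set M), v ≠ 0 →
          ¬(-(N : ℤ) ≤ B v v ∧ B v v ≤ 0)) := by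
  obtain rfl : ‹Module ℤ M› = AddCommGroup.toIntModule M := Subsingleton.elim _ _
  have : IsAddTorsionFree M := Module.isTorsionFree_int_iff_isAddTorsionFree.mp inferInstance
  obtain ⟨D, hD, k, hk⟩ := exists_dvd_forall_not_isSquare_hasNonresidueDivisors
    (B ℓ a ^ 2 - B ℓ ℓ * B a a) (mul_ne_zero two_ne_zero hpos.ne') (N * (B ℓ ℓ).toNat)
  refine ⟨e + k • f, fun n₀ => ⟨D * (n₀ + 1), by nlinarith, by positivity, ?_, ?_⟩⟩
  · refine mem_span_pair_of_smul_mem hprim (B f) hfℓ ?_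
    simp [hfa, hsymm f e, hef, hff]
  · set n : ℕ := D * (n₀ + 1)
    have hE : B ℓ ((n : ℤ) • a + (e + k • f)) ^ 2 -
        B ℓ ℓ * B ((n : ℤ) • a + (e + k • f)) ((n : ℤ) • a + (e + k • f)) =
        (B ℓ a ^ 2 - B ℓ ℓ * B a a) * n ^ 2 - 2 * B ℓ ℓ * k := by
      simp only [map_add, map_smul, LinearMap.add_apply, LinearMap.smul_apply, smul_eq_mul,
        hsymm ℓ e, hsymm ℓ f, hsymm a e, hsymm a f, hsymm f e, heℓ, hfℓ, hea, hfa, hee, hff, hef]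
      ring
    obtain ⟨hsq, hdiv⟩ := hk n (by exact_mod_cast dvd_mul_right D (n₀ + 1))
    rw [← hE] at hsq hdiv
    exact apply_self_notMem_Icc_of_mem_span_pair B hsymm hpos
      (by rw [Nat.cast_mul, Int.toNat_of_nonneg hpos.le]) hsq hdiv

/-- Let `M` be a lattice, `ℓ ∈ M` a primitive vector with `ℓ² > 0`, and
`a ∈ M`. Suppose `M` contains a copy of the hyperbolic plane orthogonal to both `ℓ` and `a`.
Then for every positive integer `N` there exist a vector `h ∈ M` and infinitely many positive
integers `n` such that the subgroup `L = ℤℓ + ℤ(n a + h)` is a primitive sublattice of `M`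
and `L` contains no nonzero vector `v` with `−N ≤ v² ≤ 0`. -/
theorem statement1
    {M : Type*} [AddCommGroup M] [Module ℤ M] [Module.Free ℤ M] [Module.Finite ℤ M]
    (B : M →ₗ[ℤ] M →ₗ[ℤ] ℤ)
    (hsymm : ∀ x y : M, B x y = B y x)
    (hnondeg : ∀ x : M, (∀ y : M, B x y = 0) → x = 0)
    (ℓ a e f : M)
    (hprim : ∀ (c : ℤ) (x : M), ℓ = c • x → 0 < c → c = 1)
    (hpos : 0 < B ℓ ℓ)
    (hee : B e e = 0) (hff : B f f = 0) (hef : B e f = 1)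
    (heℓ : B e ℓ = 0) (hea : B e a = 0) (hfℓ : B f ℓ = 0) (hfa : B f a = 0)
    (N : ℕ) (hN : 0 < N) :
    ∃ h : M, ∀ n₀ : ℕ, ∃ n : ℕ, n₀ ≤ n ∧ 0 < n ∧
      (∀ (r : ℤ) (v : M), r ≠ 0 →
          r • v ∈ Submodule.span ℤ ({ℓ, (n : ℤ) • a + h} : Set M) →
          v ∈ Submodule.span ℤ ({ℓ, (n : ℤ) • a + h} : Set M)) ∧
      (∀ v ∈ Submodule.span ℤ ({ℓ, (n : ℤ) • a + h} : Set M), v ≠ 0 →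
          ¬(-(N : ℤ) ≤ B v v ∧ B v v ≤ 0)) :=
  statement1_general B hsymm ℓ a e f hprim hpos hee hff hef heℓ hea hfℓ hfa N
end

section
/- Let M be a lattice, ℓ ∈ M a primitive vector, and w ∈ M. Suppose there exists k ∈ M with k·ℓ = 0 and k·w = 1. Then the subgroup L = ℤℓ + ℤw is a primitive sublattice of M: whenever r·v ∈ L for some nonzero integer r and some v ∈ M, one has v ∈ L. -/
/-!
Pairing with `k` reads off the `w`-coordinate: if `r • v = a • ℓ + b • w` then `b = r * (k·v)`,
so `r • (v - (k·v) • w) = a • ℓ`. It remains to see that `ℤ ∙ ℓ` is saturated in the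
torsion-free group `M`: dividing `r • u = a • ℓ` by `gcd r a` and using Bézout,
`ℓ = r' • (s • ℓ + t • u)` with `r'` the reduced `r`, so `r' = ±1` by primitivity.
-/

section

open Submodule

variable {M : Type*} [AddCommGroup M]

def IsPrimitiveVector (ℓ : M) : Prop :=
  ∀ (c : ℤ) (x : M), ℓ = c • x → 0 < c → c = 1

namespace IsPrimitiveVector

variable {ℓ : M}

theorem ne_zero (hℓ : IsPrimitiveVector ℓ) : ℓ ≠ 0 := by
  rintro rfl
  have := hℓ 2 0 (smul_zero (2 : ℤ)).symm two_pos
  omega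

theorem isUnit_of_eq_smul (hℓ : IsPrimitiveVector ℓ) {c : ℤ} {x : M} (h : ℓ = c • x) :
    IsUnit c := by
  rcases lt_trichotomy c 0 with hc | rfl | hc
  · have := hℓ (-c) (-x) (by rwa [neg_smul_neg]) (by omega)
    exact Int.isUnit_iff.mpr (Or.inr (by omega))
  · exact absurd (h.trans (zero_smul ℤ x)) hℓ.ne_zero
  · exact (hℓ c x h hc) ▸ isUnit_one

theorem mem_span_singleton_of_smul_mem [IsAddTorsionFree M] (hℓ : IsPrimitiveVector ℓ)
    {r : ℤ} {u : M} (hr : r ≠ 0) (h : r • u ∈ ℤ ∙ ℓ) : u ∈ ℤ ∙ ℓ := by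
  obtain ⟨a, ha⟩ := mem_span_singleton.mp h
  obtain ⟨g, r', a', hg, hcop, rfl, rfl⟩ := Int.exists_gcd_one' (Int.gcd_pos_of_ne_zero_left a hr)
  have hru : r' • u = a' • ℓ := by
    refine zsmul_right_injective (n := (g : ℤ)) (by omega) ?_
    simp only [smul_smul, mul_comm (g : ℤ)]
    exact ha.symm
  obtain ⟨s, t, hst⟩ := Int.isCoprime_iff_gcd_eq_one.mpr hcop
  have hℓ_eq : ℓ = r' • (s • ℓ + t • u) := by
    calc ℓ = (s * r' + t * a') • ℓ := by rw [hst, one_smul]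
      _ = r' • (s • ℓ + t • u) := by rw [add_smul, mul_smul t, ← hru]; module
  have hunit : r' * r' = 1 := Int.isUnit_mul_self (hℓ.isUnit_of_eq_smul hℓ_eq)
  exact mem_span_singleton.mpr
    ⟨r' * a', by rw [mul_smul, ← hru, smul_smul, hunit, one_smul]⟩

theorem mem_span_pair_of_smul_mem [IsAddTorsionFree M] (hℓ : IsPrimitiveVector ℓ)
    {w : M} (f : M →ₗ[ℤ] ℤ) (hfℓ : f ℓ = 0) (hfw : f w = 1) {r : ℤ} {v : M} (hr : r ≠ 0)
    (h : r • v ∈ span ℤ {ℓ, w}) : v ∈ span ℤ {ℓ, w} := by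
  obtain ⟨a, b, hab⟩ := mem_span_pair.mp h
  have hb : b = r * f v := by simpa [hfℓ, hfw] using congr(f $hab)
  have hsmul : r • (v - f v • w) ∈ ℤ ∙ ℓ :=
    mem_span_singleton.mpr ⟨a, by rw [smul_sub, smul_smul, ← hb, ← hab, add_sub_cancel_right]⟩
  obtain ⟨c, hc⟩ := mem_span_singleton.mp (hℓ.mem_span_singleton_of_smul_mem hr hsmul)
  exact mem_span_pair.mpr ⟨c, f v, by rw [hc, sub_add_cancel]⟩

end IsPrimitiveVector

end

theorem statement4_general
    {M : Type*} [AddCommGroup M] [Module ℤ M] [Module.Free ℤ M]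
    (B : M →ₗ[ℤ] M →ₗ[ℤ] ℤ)
    (ℓ w : M)
    (hprim : ∀ (c : ℤ) (x : M), ℓ = c • x → 0 < c → c = 1)
    (k : M) (hkℓ : B k ℓ = 0) (hkw : B k w = 1) :
    ∀ (r : ℤ) (v : M), r ≠ 0 →
      r • v ∈ Submodule.span ℤ ({ℓ, w} : Set M) →
      v ∈ Submodule.span ℤ ({ℓ, w} : Set M) := by
  -- the lemmas above are stated for the canonical `ℤ`-action `zsmul`
  obtain rfl : ‹Module ℤ M› = AddCommGroup.toIntModule M := Subsingleton.elim _ _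
  have : IsAddTorsionFree M := Module.isTorsionFree_int_iff_isAddTorsionFree.mp inferInstance
  exact fun _ _ hr ↦ IsPrimitiveVector.mem_span_pair_of_smul_mem hprim (B k) hkℓ hkw hr

/-- Let `M` be a lattice, `ℓ ∈ M` a primitive vector, and `w ∈ M`.
Suppose there exists `k ∈ M` with `k·ℓ = 0` and `k·w = 1`. Then the subgroup
`L = ℤℓ + ℤw` is a primitive sublattice of `M`: whenever `r·v ∈ L` for some nonzero
integer `r` and some `v ∈ M`, one has `v ∈ L`. -/
theorem statement4
    {M : Type*} [AddCommGroup M] [Module ℤ M] [Module.Free ℤ M] [Module.Finite ℤ M]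
    (B : M →ₗ[ℤ] M →ₗ[ℤ] ℤ)
    (hsymm : ∀ x y : M, B x y = B y x)
    (hnondeg : ∀ x : M, (∀ y : M, B x y = 0) → x = 0)
    (ℓ w : M)
    (hprim : ∀ (c : ℤ) (x : M), ℓ = c • x → 0 < c → c = 1)
    (k : M) (hkℓ : B k ℓ = 0) (hkw : B k w = 1) :
    ∀ (r : ℤ) (v : M), r ≠ 0 →
      r • v ∈ Submodule.span ℤ ({ℓ, w} : Set M) →
      v ∈ Submodule.span ℤ ({ℓ, w} : Set M) :=
  statement4_general B ℓ w hprim k hkℓ hkw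
end

section
/- Let d be a positive integer and let m, K be integers such that 4·Q(d) divides m. Then there are no integers x, y satisfying x² + m·K·y² = −d. -/
/-- For a positive integer `d`, `Q d := ∏_{p prime, p ∣ d} p^(2⌈v_p(d)/2⌉)`, the product
running over the prime divisors of `d`, where `v_p(d)` is the `p`-adic valuation of `d`. -/
def Q (d : ℕ) : ℕ := ∏ p ∈ d.primeFactors, p ^ (2 * ((d.factorization p + 1) / 2))

lemma dvd_Q {d : ℕ} (hd : d ≠ 0) : d ∣ Q d := by
  conv_lhs => rw [← Nat.factorization_prod_pow_eq_self hd]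
  rw [Finsupp.prod, Nat.support_factorization]
  exact Finset.prod_dvd_prod_of_dvd _ _ fun p _ => pow_dvd_pow p (by omega)

lemma Q_eq_sq (d : ℕ) :
    Q d = (∏ p ∈ d.primeFactors, p ^ ((d.factorization p + 1) / 2)) ^ 2 := by
  rw [← Finset.prod_pow]
  refine Finset.prod_congr rfl fun p _ => ?_
  rw [← pow_mul, mul_comm]

/-- Let `d` be a positive integer and let `m, K` be integers such that
`4·Q(d)` divides `m`. Then there are no integers `x, y` satisfying `x² + m·K·y² = −d`. -/
theorem statement8 (d : ℕ) (hd : 0 < d) (m K : ℤ)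
    (hm : (4 * Q d : ℤ) ∣ m) :
    ¬ ∃ x y : ℤ, x ^ 2 + m * K * y ^ 2 = -(d : ℤ) := by
  rintro ⟨x, y, hxy⟩
  set c : ℕ := ∏ p ∈ d.primeFactors, p ^ ((d.factorization p + 1) / 2) with hc
  have hQc : Q d = c ^ 2 := Q_eq_sq d
  have hdQ : d ∣ Q d := dvd_Q hd.ne'
  have h4Q : (4 * Q d : ℤ) ∣ x ^ 2 + d := by
    have h1 : x ^ 2 + (d : ℤ) = -(m * (K * y ^ 2)) := by linarith
    rw [h1]
    exact (hm.mul_right (K * y ^ 2)).neg_right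
  have hQxd : (Q d : ℤ) ∣ x ^ 2 + d := dvd_trans ⟨4, by ring⟩ h4Q
  have hdxd : (d : ℤ) ∣ x ^ 2 + d := (Int.natCast_dvd_natCast.mpr hdQ).trans hQxd
  have hdx2 : (d : ℤ) ∣ x ^ 2 := (dvd_add_left (dvd_refl _)).mp hdxd
  have hx2 : d ∣ x.natAbs ^ 2 := by
    rw [← Int.natAbs_pow]; exact Int.natCast_dvd.mp hdx2
  have hcx : (c : ℤ) ∣ x := by
    rw [Int.natCast_dvd]
    rcases eq_or_ne x 0 with rfl | hx
    · simp
    have hxa : x.natAbs ≠ 0 := Int.natAbs_ne_zero.mpr hx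
    have hxa2 : x.natAbs ^ 2 ≠ 0 := pow_ne_zero _ hxa
    -- work via ℤ coprimality
    have key : ∀ p ∈ d.primeFactors, p ^ ((d.factorization p + 1) / 2) ∣ x.natAbs := by
      intro p hp
      have pp : p.Prime := Nat.prime_of_mem_primeFactors hp
      have hpv : p ^ d.factorization p ∣ x.natAbs ^ 2 :=
        (Nat.ordProj_dvd d p).trans hx2
      have hle : d.factorization p ≤ (x.natAbs ^ 2).factorization p :=
        (Nat.Prime.pow_dvd_iff_le_factorization pp hxa2).mp hpv
      rw [Nat.factorization_pow] at hle
      simp only [Finsupp.smul_apply, smul_eq_mul] at hle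
      exact (Nat.Prime.pow_dvd_iff_le_factorization pp hxa).mpr (by omega)
    -- now c ∣ x.natAbs via pairwise coprime product (in ℤ)
    rw [← Int.natCast_dvd_natCast]
    rw [hc]
    push_cast
    apply Finset.prod_dvd_of_coprime
    · intro p hp q hq hpq
      have pp : (p : ℕ).Prime := Nat.prime_of_mem_primeFactors hp
      have qq : (q : ℕ).Prime := Nat.prime_of_mem_primeFactors hq
      have : Nat.Coprime (p ^ ((d.factorization p + 1) / 2))
          (q ^ ((d.factorization q + 1) / 2)) :=
        ((Nat.coprime_primes pp qq).mpr hpq).pow _ _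
      have := this.isCoprime
      simpa [Function.onFun] using this
    · intro p hp
      exact_mod_cast (dvd_abs _ _).mpr (Int.natCast_dvd.mpr (key p hp))
  -- Q d ∣ x ^ 2
  have hQx2 : (Q d : ℤ) ∣ x ^ 2 := by
    rw [hQc]
    push_cast
    exact pow_dvd_pow_of_dvd hcx 2
  have hQd : Q d ∣ d := by
    rw [← Int.natCast_dvd_natCast]
    exact (dvd_add_right hQx2).mp hQxd
  have hQeq : Q d = d := Nat.dvd_antisymm hQd hdQ
  obtain ⟨t, ht⟩ := hcx
  have hc0 : (c : ℤ) ≠ 0 := by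
    have : c ^ 2 ≠ 0 := by rw [← hQc, hQeq]; exact hd.ne'
    exact_mod_cast fun h => this (by exact_mod_cast pow_eq_zero_iff (n := 2) (by norm_num) |>.mpr (by exact_mod_cast h))
  have h4t : (4 : ℤ) ∣ t ^ 2 + 1 := by
    obtain ⟨u, hu⟩ := h4Q
    rw [ht, hQc, ← hQeq, hQc] at hu
    push_cast at hu
    have hceq : (c : ℤ) ^ 2 * (t ^ 2 + 1) = (c : ℤ) ^ 2 * (4 * u) := by ring_nf; ring_nf at hu; linarith
    have := mul_left_cancel₀ (pow_ne_zero 2 hc0) hceq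
    exact ⟨u, this⟩
  have hz : ((t : ZMod 4) ^ 2 + 1 = 0) := by
    have := (ZMod.intCast_zmod_eq_zero_iff_dvd (t ^ 2 + 1) 4).mpr h4t
    push_cast at this
    exact this
  revert hz
  exact fun hz => by
    have : ∀ z : ZMod 4, z ^ 2 + 1 ≠ 0 := by decide
    exact this _ hz
end

section
/- Let M be a lattice and let ℓ, b, h ∈ M be pairwise orthogonal vectors with A := ℓ² > 0. Let N and n be positive integers, and let m be a positive integer that is not a perfect square, is divisible by 4·∏_{d ≥ 1, A·d ≤ N} Q(d), and satisfies h² = A·m. Then the subgroup of M generated by ℓ and (m·A·n)·b + h contains no nonzero vector v with −N ≤ v² ≤ 0. -/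
lemma keylem (d s m : ℕ) (hd : 0 < d) (h4 : 4 * Q d ∣ m) (hdvd : m ∣ s ^ 2 + d) : False := by
  have hd0 : d ≠ 0 := hd.ne'
  by_cases hsq : ∀ p ∈ d.primeFactors, Even (d.factorization p)
  · -- d is a square, Q d = d
    have hQ : Q d = d := by
      unfold Q
      rw [show (∏ p ∈ d.primeFactors, p ^ (2 * ((d.factorization p + 1) / 2)))
          = ∏ p ∈ d.primeFactors, p ^ (d.factorization p) from
        Finset.prod_congr rfl fun p hp => by
          obtain ⟨k, hk⟩ := hsq p hp; rw [hk]; congr 1; omega]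
      conv_rhs => rw [← Nat.factorization_prod_pow_eq_self hd0]
      rfl
    have hq : ∃ q, d = q ^ 2 := by
      refine ⟨∏ p ∈ d.primeFactors, p ^ (d.factorization p / 2), ?_⟩
      rw [← Finset.prod_pow]
      rw [show (∏ p ∈ d.primeFactors, (p ^ (d.factorization p / 2)) ^ 2)
          = ∏ p ∈ d.primeFactors, p ^ (d.factorization p) from
        Finset.prod_congr rfl fun p hp => by
          obtain ⟨k, hk⟩ := hsq p hp; rw [← pow_mul, hk]; congr 1; omega]
      conv_lhs => rw [← Nat.factorization_prod_pow_eq_self hd0]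
      rfl
    obtain ⟨q, rfl⟩ := hq
    have hq0 : q ≠ 0 := by rintro rfl; simp at hd
    have h4d : 4 * q ^ 2 ∣ s ^ 2 + q ^ 2 := (hQ ▸ h4).trans hdvd
    have hds : q ^ 2 ∣ s ^ 2 := by
      have h1 : q ^ 2 ∣ s ^ 2 + q ^ 2 := dvd_trans (Dvd.intro_left 4 rfl) h4d
      exact (Nat.dvd_add_iff_left (dvd_refl (q ^ 2))).mpr h1
    obtain ⟨u, rfl⟩ := (Nat.pow_dvd_pow_iff two_ne_zero).mp hds
    have h4u : 4 ∣ u ^ 2 + 1 := by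
      have : q ^ 2 * 4 ∣ q ^ 2 * (u ^ 2 + 1) := by
        rw [mul_comm (q^2) 4]; convert h4d using 1; ring
      exact (mul_dvd_mul_iff_left (pow_ne_zero 2 hq0)).mp this
    rcases Nat.even_or_odd u with ⟨k, hk⟩ | ⟨k, hk⟩ <;>
      [ (have hu2 : u ^ 2 = 4 * (k * k) := by subst hk; ring);
        (have hu2 : u ^ 2 = 4 * (k * k) + 4 * k + 1 := by subst hk; ring)] <;>
      · obtain ⟨K, hK⟩ : ∃ K, k * k = K := ⟨_, rfl⟩
        omega
  · push_neg at hsq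
    obtain ⟨p, hp, hodd⟩ := hsq
    have hpp : p.Prime := Nat.prime_of_mem_primeFactors hp
    set e := d.factorization p with he
    have hfe : 2 * ((e + 1) / 2) = e + 1 := by
      rcases Nat.even_or_odd e with hev | ⟨k, hk⟩
      · exact absurd hev hodd
      · omega
    have hpQ : p ^ (e + 1) ∣ Q d := by
      rw [← hfe]; exact Finset.dvd_prod_of_mem _ hp
    have hpm : p ^ (e + 1) ∣ s ^ 2 + d :=
      (hpQ.trans (dvd_trans (Dvd.intro_left 4 rfl) h4)).trans hdvd
    have hnd : ¬ p ^ (e + 1) ∣ d := Nat.pow_succ_factorization_not_dvd hd0 hpp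
    have hs0 : s ≠ 0 := by rintro rfl; simp at hpm; exact hnd hpm
    have hs2 : (s ^ 2) ≠ 0 := pow_ne_zero 2 hs0
    set v := (s ^ 2).factorization p with hv
    have hveven : Even v := by
      rw [hv, Nat.factorization_pow]; exact ⟨s.factorization p, by simp [two_mul]⟩
    have hvle : v ≤ e := by
      by_contra hgt
      push_neg at hgt
      have : p ^ (e + 1) ∣ s ^ 2 :=
        (Nat.Prime.pow_dvd_iff_le_factorization hpp hs2).mpr (by omega)
      exact hnd ((Nat.dvd_add_iff_right this).mpr hpm)
    have hvge : e ≤ v := by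
      by_contra hlt
      push_neg at hlt
      have h1 : p ^ (v + 1) ∣ d :=
        (Nat.Prime.pow_dvd_iff_le_factorization hpp hd0).mpr (by omega)
      have h2 : p ^ (v + 1) ∣ s ^ 2 + d :=
        dvd_trans (pow_dvd_pow p (by omega)) hpm
      exact Nat.pow_succ_factorization_not_dvd hs2 hpp ((Nat.dvd_add_iff_left h1).mpr h2)
    obtain ⟨k, hk⟩ := hveven
    have hj : e % 2 = 1 := Nat.odd_iff.mp (Nat.not_even_iff_odd.mp hodd)
    omega

/-- Let `M` be a lattice and let `ℓ, b, h ∈ M` be pairwise orthogonal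
vectors with `A := ℓ² > 0`. Let `N` and `n` be positive integers, and let `m` be a positive
integer that is not a perfect square, is divisible by `4·∏_{d ≥ 1, A·d ≤ N} Q(d)`, and
satisfies `h² = A·m`. Then the subgroup of `M` generated by `ℓ` and `(m·A·n)·b + h`
contains no nonzero vector `v` with `−N ≤ v² ≤ 0`. -/
theorem statement11
    {M : Type*} [AddCommGroup M] [Module ℤ M] [Module.Free ℤ M] [Module.Finite ℤ M]
    (B : M →ₗ[ℤ] M →ₗ[ℤ] ℤ)
    (hsymm : ∀ x y : M, B x y = B y x)
    (hnondeg : ∀ x : M, (∀ y : M, B x y = 0) → x = 0)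
    (ℓ b h : M)
    (hℓb : B ℓ b = 0) (hℓh : B ℓ h = 0) (hbh : B b h = 0)
    (hA : 0 < B ℓ ℓ)
    (N n : ℕ) (hN : 0 < N) (hn : 0 < n)
    (m : ℤ) (hm : 0 < m) (hns : ¬ ∃ q : ℤ, m = q ^ 2)
    (hdiv : ((4 * ∏ d ∈ (Finset.Icc 1 N).filter (fun d : ℕ => B ℓ ℓ * (d : ℤ) ≤ (N : ℤ)), Q d : ℕ) : ℤ) ∣ m)
    (hh : B h h = B ℓ ℓ * m) :
    ∀ v ∈ Submodule.span ℤ ({ℓ, (m * B ℓ ℓ * (n : ℤ)) • b + h} : Set M), v ≠ 0 →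
      ¬(-(N : ℤ) ≤ B v v ∧ B v v ≤ 0) := by
  intro v hv hvne hcon
  obtain ⟨hle, hge⟩ := hcon
  obtain ⟨x, y, hxy⟩ := Submodule.mem_span_pair.mp hv
  have hbℓ : B b ℓ = 0 := (hsymm b ℓ).trans hℓb
  have hhℓ : B h ℓ = 0 := (hsymm h ℓ).trans hℓh
  have hhb : B h b = 0 := (hsymm h b).trans hbh
  set A := B ℓ ℓ with hAdef
  set c := B b b with hcdef
  set K : ℤ := m * A * (n : ℤ) ^ 2 * c + 1 with hKdef
  set w : M := (m * A * (n : ℤ)) • b + h with hwdef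
  clear_value A c K w
  have key : B v v = A * (x ^ 2 + y ^ 2 * m * K) := by
    rw [← hxy]
    simp [hwdef, hKdef, hAdef, hcdef, map_add, LinearMap.map_smul, LinearMap.map_smul₂,
      LinearMap.add_apply, LinearMap.smul_apply, smul_eq_mul, hℓb, hℓh, hbh, hbℓ, hhℓ, hhb, hh]
    ring
  rw [key] at hle hge
  have h4m : (4 : ℤ) ∣ m := by
    refine dvd_trans ?_ hdiv
    exact ⟨((∏ d ∈ (Finset.Icc 1 N).filter (fun d : ℕ => A * (d : ℤ) ≤ (N : ℤ)), Q d : ℕ) : ℤ),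
      by push_cast; ring⟩
  have hm4 : (4 : ℤ) ≤ m := Int.le_of_dvd hm h4m
  by_cases hy : y = 0
  · subst hy
    have hx : x ≠ 0 := by
      rintro rfl
      apply hvne
      rw [← hxy]
      module
    have hx2 : 0 < x ^ 2 := by positivity
    nlinarith
  · have hy2 : 1 ≤ y ^ 2 := by
      have : 0 < y ^ 2 := by positivity
      omega
    rcases le_or_gt 1 K with hK | hK
    · have h1 : 0 < y ^ 2 * m * K := by positivity
      nlinarith
    · -- K ≤ 0
      obtain ⟨D, hDdef⟩ : ∃ D : ℤ, D = -(x ^ 2 + y ^ 2 * m * K) := ⟨_, rfl⟩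
      have hBvv : A * (x ^ 2 + y ^ 2 * m * K) = -(A * D) := by rw [hDdef]; ring
      have hD0 : 0 ≤ D := by nlinarith
      have hcop : IsCoprime m (-K) := by
        refine IsCoprime.neg_right ⟨-(A * (n : ℤ) ^ 2 * c), 1, ?_⟩
        rw [hKdef]; ring
      rcases eq_or_lt_of_le hD0 with hD | hD
      · -- D = 0 : m * (-K) is a perfect square, contradiction
        have hx2 : x ^ 2 = y ^ 2 * (m * (-K)) := by
          have : x ^ 2 + y ^ 2 * m * K = 0 := by omega
          linarith
        have hyx : y ∣ x := by
          refine (Int.pow_dvd_pow_iff two_ne_zero).mp ⟨m * (-K), ?_⟩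
          rw [hx2]
        obtain ⟨u, rfl⟩ := hyx
        have hmu : m * (-K) = u ^ 2 := by
          have hy2ne : y ^ 2 ≠ 0 := by positivity
          have : y ^ 2 * (m * (-K)) = y ^ 2 * u ^ 2 := by rw [← hx2]; ring
          have := mul_left_cancel₀ hy2ne this
          omega
        obtain ⟨a, ha | ha⟩ := Int.sq_of_isCoprime hcop hmu
        · exact hns ⟨a, ha⟩
        · nlinarith [sq_nonneg a]
      · -- D ≥ 1
        have hAD : A * D ≤ (N : ℤ) := by linarith
        have hADpos : 0 < A * D := mul_pos hA hD
        obtain ⟨d, hdD⟩ : ∃ d : ℕ, (d : ℤ) = D := ⟨D.toNat, Int.toNat_of_nonneg hD0⟩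
        have hdpos : 0 < d := by
          have : (0 : ℤ) < (d : ℤ) := by rw [hdD]; exact hD
          exact_mod_cast this
        have hdN : d ≤ N := by
          have h1 : D ≤ A * D := le_mul_of_one_le_left hD0 (by linarith)
          have : (d : ℤ) ≤ (N : ℤ) := by rw [hdD]; linarith
          exact_mod_cast this
        have hmem : d ∈ (Finset.Icc 1 N).filter (fun d : ℕ => A * (d : ℤ) ≤ (N : ℤ)) := by
          simp only [Finset.mem_filter, Finset.mem_Icc]
          refine ⟨⟨hdpos, hdN⟩, ?_⟩
          rw [hdD]; exact hAD
        have hQdvd : Q d ∣ ∏ d ∈ (Finset.Icc 1 N).filter (fun d : ℕ => A * (d : ℤ) ≤ (N : ℤ)), Q d :=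
          Finset.dvd_prod_of_mem _ hmem
        have h4Q : ((4 * Q d : ℕ) : ℤ) ∣ m := by
          refine dvd_trans ?_ hdiv
          exact_mod_cast Nat.mul_dvd_mul_left 4 hQdvd
        have hmdvd : m ∣ x ^ 2 + D := ⟨y ^ 2 * (-K), by rw [hDdef]; ring⟩
        obtain ⟨s, hs2⟩ : ∃ s : ℕ, ((s : ℤ)) ^ 2 = x ^ 2 :=
          ⟨x.natAbs, by rw [← Int.abs_eq_natAbs, sq_abs]⟩
        obtain ⟨mn, hmn⟩ : ∃ mn : ℕ, ((mn : ℤ)) = m := ⟨m.toNat, Int.toNat_of_nonneg hm.le⟩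
        have h4Qn : 4 * Q d ∣ mn := by
          have : ((4 * Q d : ℕ) : ℤ) ∣ ((mn : ℕ) : ℤ) := by rw [hmn]; exact h4Q
          exact_mod_cast this
        have hmds : mn ∣ s ^ 2 + d := by
          have : ((mn : ℕ) : ℤ) ∣ ((s ^ 2 + d : ℕ) : ℤ) := by
            rw [hmn]
            push_cast
            rw [hs2, hdD]
            exact hmdvd
          exact_mod_cast this
        exact keylem d s mn hdpos h4Qn hmds
end
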